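/- Let n ≥ 2, let u ∈ ℝⁿ be unit timelike, and let R be a symmetric real n×n matrix. Then θ_uᵀ R θ_u = −R (R is purely magnetic with respect to u) if and only if there exists c ∈ ℝⁿ with cᵀu = 0 such that R = (ηu)cᵀ + c(ηu)ᵀ. In this case cᵀηc ≥ 0 and the characteristic polynomial of the operator ηR equals X^{n−2}·(X² + cᵀηc); in particular, ηR has the eigenvalue 0 with multiplicity n − 2 and the purely imaginary eigenvalues ±i√(cᵀηc), and the trace of ηR (hence the Ricci scalar) vanishes. -/

import Mathlib

/-!
Write `v = ηu`, so that `θ_u = 1 + 2uvᵀ` with `v·u = -1`, hence `θ_u u = -u`. For symmetric `R`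
and `a = Ru` one computes `θ_uᵀ R θ_u = R + 2(vaᵀ + avᵀ) + 4(a·u)vvᵀ`. Sandwiching the purely
magnetic condition between `u` gives `uᵀRu = -uᵀRu`, so `a·u = 0` and `R = vcᵀ + cvᵀ` with
`c = -a`; conversely such an `R` has `Ru = -c`, and the same identity gives `θ_uᵀ R θ_u = -R`.

Then `ηR = ucᵀ + (ηc)vᵀ = AB` with `A = [u | ηc]` of size `n × 2` and `B = [c ; v]` of size
`2 × n`, so `χ(AB) = X^(n-2) χ(BA)` and `BA = [[0, cᵀηc], [-1, 0]]`. Finally `ηc` is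
η-orthogonal to the timelike vector `u`, hence spacelike (reverse Cauchy–Schwarz): `cᵀηc ≥ 0`.
-/

open Matrix

noncomputable section

/-- The Minkowski metric `η = diag(-1, 1, …, 1)` on `ℝⁿ`. -/
def eta (n : ℕ) : Matrix (Fin n) (Fin n) ℝ :=
  Matrix.diagonal fun i => if i.val = 0 then (-1 : ℝ) else 1

/-- The reflection `θ_u = I + 2u(ηu)ᵀ` sending `u ↦ -u` and fixing `u^⊥`. -/
def theta {n : ℕ} (u : Fin n → ℝ) : Matrix (Fin n) (Fin n) ℝ :=
  1 + (2 : ℝ) • vecMulVec u ((eta n).mulVec u)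

namespace Matrix

variable {K ι : Type*} [Fintype ι]

theorem dotProduct_transpose_mul_mul_mulVec [CommSemiring K] (A M : Matrix ι ι K) (x : ι → K) :
    x ⬝ᵥ (Aᵀ * M * A) *ᵥ x = A *ᵥ x ⬝ᵥ M *ᵥ (A *ᵥ x) := by
  rw [← mulVec_mulVec, ← mulVec_mulVec, dotProduct_mulVec, vecMul_transpose]

open Polynomial in
theorem charpoly_vecMulVec_add_vecMulVec [CommRing K] [Nontrivial K] [DecidableEq ι]
    (hι : 2 ≤ Fintype.card ι) (a b c d : ι → K) :
    (vecMulVec a c + vecMulVec b d).charpoly = X ^ (Fintype.card ι - 2) *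
      (X ^ 2 - C (c ⬝ᵥ a + d ⬝ᵥ b) * X + C (c ⬝ᵥ a * (d ⬝ᵥ b) - c ⬝ᵥ b * (d ⬝ᵥ a))) := by
  have hAB : (of ![a, b])ᵀ * of ![c, d] = vecMulVec a c + vecMulVec b d := by
    ext i j
    simp [mul_apply, Fin.sum_univ_two, vecMulVec_apply]
  have hBA : of ![c, d] * (of ![a, b])ᵀ = !![c ⬝ᵥ a, c ⬝ᵥ b; d ⬝ᵥ a, d ⬝ᵥ b] := by
    ext k l
    fin_cases k <;> fin_cases l <;> simp [mul_apply, dotProduct]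
  rw [← hAB, charpoly_mul_comm_of_le _ _ (by simpa using hι), hBA, charpoly_fin_two,
    trace_fin_two, det_fin_two]
  simp

section Reflection

variable [CommRing K] [DecidableEq ι] {u v : ι → K}

theorem one_add_two_smul_vecMulVec_mulVec (hvu : v ⬝ᵥ u = -1) :
    (1 + (2 : K) • vecMulVec u v) *ᵥ u = -u := by
  rw [add_mulVec, one_mulVec, smul_mulVec, vecMulVec_mulVec, hvu, MulOpposite.op_neg,
    MulOpposite.op_one, neg_smul, one_smul]
  module

theorem transpose_mul_mul_one_add_two_smul_vecMulVec {R : Matrix ι ι K} (hR : Rᵀ = R) :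
    (1 + (2 : K) • vecMulVec u v)ᵀ * R * (1 + (2 : K) • vecMulVec u v) =
      R + (2 : K) • (vecMulVec v (R *ᵥ u) + vecMulVec (R *ᵥ u) v) +
        (4 * (R *ᵥ u ⬝ᵥ u)) • vecMulVec v v := by
  have huR : u ᵥ* R = R *ᵥ u := by rw [← mulVec_transpose, hR]
  simp only [transpose_add, transpose_one, transpose_smul, transpose_vecMulVec, add_mul, mul_add,
    one_mul, mul_one, Matrix.smul_mul, Matrix.mul_smul]
  rw [vecMulVec_mul, huR, mul_vecMulVec, vecMulVec_mul_vecMulVec, vecMulVec_smul]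
  module

end Reflection

theorem transpose_mul_mul_one_add_two_smul_vecMulVec_eq_neg_iff [Field K] [CharZero K]
    [DecidableEq ι] {u v : ι → K} (hvu : v ⬝ᵥ u = -1) {R : Matrix ι ι K} (hR : Rᵀ = R) :
    (1 + (2 : K) • vecMulVec u v)ᵀ * R * (1 + (2 : K) • vecMulVec u v) = -R ↔
      ∃ c, c ⬝ᵥ u = 0 ∧ R = vecMulVec v c + vecMulVec c v := by
  constructor
  · intro h
    have hRuu : R *ᵥ u ⬝ᵥ u = 0 := by
      have hsandwich := congrArg (fun M => u ⬝ᵥ M *ᵥ u) h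
      simp only [dotProduct_transpose_mul_mul_mulVec, one_add_two_smul_vecMulVec_mulVec hvu,
        mulVec_neg, neg_mulVec, dotProduct_neg, neg_dotProduct, neg_neg] at hsandwich
      rwa [dotProduct_comm, self_eq_neg] at hsandwich
    rw [transpose_mul_mul_one_add_two_smul_vecMulVec hR, hRuu, mul_zero, zero_smul,
      add_zero] at h
    refine ⟨-(R *ᵥ u), by rw [neg_dotProduct, hRuu, neg_zero], ?_⟩
    rw [neg_vecMulVec, vecMulVec_neg]
    linear_combination (norm := module) (2⁻¹ : K) • h
  · rintro ⟨c, hc, rfl⟩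
    have hRu : (vecMulVec v c + vecMulVec c v) *ᵥ u = -c := by
      ext i
      simp [add_mulVec, vecMulVec_mulVec, hc, hvu]
    rw [transpose_mul_mul_one_add_two_smul_vecMulVec hR, hRu, neg_dotProduct, hc]
    simp only [neg_vecMulVec, vecMulVec_neg]
    module

end Matrix

theorem eta_transpose (n : ℕ) : (eta n)ᵀ = eta n := diagonal_transpose _

theorem eta_mul_eta (n : ℕ) : eta n * eta n = 1 := by
  rw [eta, diagonal_mul_diagonal, ← diagonal_one]
  congr 1
  ext i
  split_ifs <;> norm_num

theorem eta_mulVec_eta_mulVec {n : ℕ} (x : Fin n → ℝ) : eta n *ᵥ (eta n *ᵥ x) = x := by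
  rw [mulVec_mulVec, eta_mul_eta, one_mulVec]

theorem eta_mulVec_dotProduct_eta_mulVec {n : ℕ} (x y : Fin n → ℝ) :
    eta n *ᵥ x ⬝ᵥ eta n *ᵥ y = x ⬝ᵥ y := by
  rw [dotProduct_mulVec, ← mulVec_transpose, eta_transpose, eta_mulVec_eta_mulVec]

theorem dotProduct_eta_succ_mulVec {m : ℕ} (x y : Fin (m + 1) → ℝ) :
    x ⬝ᵥ eta (m + 1) *ᵥ y = -(x 0 * y 0) + ∑ i : Fin m, x i.succ * y i.succ := by
  simp [dotProduct, eta, mulVec_diagonal, Fin.sum_univ_succ]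

theorem dotProduct_eta_mulVec_self_nonneg {n : ℕ} {u c : Fin n → ℝ}
    (hu : u ⬝ᵥ eta n *ᵥ u < 0) (hc : c ⬝ᵥ u = 0) : 0 ≤ c ⬝ᵥ eta n *ᵥ c := by
  cases n with
  | zero => simp at hu
  | succ m =>
    rw [dotProduct_eta_succ_mulVec] at hu ⊢
    rw [dotProduct, Fin.sum_univ_succ] at hc
    have hCS := Finset.sum_mul_sq_le_sq_mul_sq Finset.univ (fun i : Fin m => c i.succ)
      (fun i => u i.succ)
    rw [eq_neg_of_add_eq_zero_right hc] at hCS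
    simp only [← sq] at hu ⊢
    have hc_nonneg : 0 ≤ ∑ i : Fin m, c i.succ ^ 2 := by positivity
    have hu_nonneg : 0 ≤ ∑ i : Fin m, u i.succ ^ 2 := by positivity
    nlinarith

/-- A symmetric (Ricci-like) matrix `R` is purely magnetic with respect to a unit
timelike `u` iff `R = (ηu)cᵀ + c(ηu)ᵀ` for some covector `c` with `cᵀu = 0`; in this
case `cᵀηc ≥ 0`, the characteristic polynomial of the Ricci operator `ηR` is
`X^(n-2)·(X² + cᵀηc)` (so `ηR` has eigenvalue `0` with multiplicity `n-2` and the
purely imaginary eigenvalues `±i√(cᵀηc)`), and the trace of `ηR` vanishes. -/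
theorem stmt15 {n : ℕ} (hn : 2 ≤ n) (u : Fin n → ℝ)
    (hu : u ⬝ᵥ (eta n).mulVec u = -1)
    (R : Matrix (Fin n) (Fin n) ℝ) (hR : Rᵀ = R) :
    ((theta u)ᵀ * R * theta u = -R ↔
      ∃ c : Fin n → ℝ, c ⬝ᵥ u = 0 ∧
        R = vecMulVec ((eta n).mulVec u) c + vecMulVec c ((eta n).mulVec u)) ∧
    (∀ c : Fin n → ℝ, c ⬝ᵥ u = 0 →
      R = vecMulVec ((eta n).mulVec u) c + vecMulVec c ((eta n).mulVec u) →
      0 ≤ c ⬝ᵥ (eta n).mulVec c ∧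
      (eta n * R).charpoly = Polynomial.X ^ (n - 2) *
        (Polynomial.X ^ 2 + Polynomial.C (c ⬝ᵥ (eta n).mulVec c)) ∧
      Matrix.trace (eta n * R) = 0) := by
  have hvu : eta n *ᵥ u ⬝ᵥ u = -1 := by rwa [dotProduct_comm]
  refine ⟨transpose_mul_mul_one_add_two_smul_vecMulVec_eq_neg_iff hvu hR, fun c hc hRc => ?_⟩
  have hRicci : eta n * R = vecMulVec u c + vecMulVec (eta n *ᵥ c) (eta n *ᵥ u) := by
    rw [hRc, mul_add, mul_vecMulVec, mul_vecMulVec, eta_mulVec_eta_mulVec]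
  have hvw : eta n *ᵥ u ⬝ᵥ eta n *ᵥ c = 0 := by
    rw [eta_mulVec_dotProduct_eta_mulVec, dotProduct_comm, hc]
  refine ⟨dotProduct_eta_mulVec_self_nonneg (hu.trans_lt neg_one_lt_zero) hc, ?_, ?_⟩
  · rw [hRicci, charpoly_vecMulVec_add_vecMulVec (by simpa using hn), hc, hvu, hvw]
    simp
  · rw [hRicci, trace_add, trace_vecMulVec, trace_vecMulVec, dotProduct_comm, hc,
      dotProduct_comm, hvw, add_zero]

end
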